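/- arXiv:1207.3384 — 3 statements merged into one kernel-verified Lean document; each statement's English description precedes it below -/
import Mathlib

section
/- Let C be a linear MDS code over a finite chain ring R (a code meeting the Singleton bound d_H(C) = n − log_{|R|}|C| + 1) of rank k and type 1^{k_0} γ^{k_1} ⋯ (γ^{e−1})^{k_{e−1}}. Then k_i = 0 for all i > 0; that is, C is a free R-module. -/
/-!
If `d` is the minimum distance of `C` and `S` is a set of `n + 1 - d` coordinates, a nonzero
codeword vanishing on `S` would have weight at most `d - 1`, so projecting `C` onto `S` is
injective. The Singleton equality `|C| = |R| ^ |S|` makes this projection bijective, hence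
`C ≅ R^S` is free.
-/

/-- The Hamming weight of a vector: the number of nonzero coordinates. -/
noncomputable def hammingWeight {R : Type*} [Zero R] {n : ℕ} (v : Fin n → R) : ℕ :=
  Nat.card {i : Fin n // v i ≠ 0}

/-- The minimum Hamming distance of a code: the minimum Hamming weight of a nonzero
codeword. -/
noncomputable def minHammingDist {R : Type*} [CommRing R] {n : ℕ}
    (C : Submodule R (Fin n → R)) : ℕ :=
  sInf {d | ∃ v ∈ C, v ≠ 0 ∧ hammingWeight v = d}

open Finset

theorem hammingWeight_le_of_forall_mem_eq_zero {R : Type*} [Zero R] {n : ℕ} {v : Fin n → R}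
    {S : Finset (Fin n)} (h : ∀ i ∈ S, v i = 0) : hammingWeight v ≤ n - #S := by
  classical
  have hsupp : ({i | v i ≠ 0} : Finset (Fin n)) ⊆ Sᶜ := fun i hi =>
    mem_compl.2 fun hiS => (mem_filter.1 hi).2 (h i hiS)
  calc hammingWeight v = #{i | v i ≠ 0} := by
        rw [hammingWeight, Nat.card_eq_fintype_card, Fintype.card_subtype]
    _ ≤ #Sᶜ := card_le_card hsupp
    _ = n - #S := by rw [card_compl, Fintype.card_fin]

theorem hammingWeight_pos {R : Type*} [Zero R] {n : ℕ} {v : Fin n → R} (hv : v ≠ 0) :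
    0 < hammingWeight v := by
  obtain ⟨i, hi⟩ := Function.ne_iff.mp hv
  have : Nonempty {i : Fin n // v i ≠ 0} := ⟨⟨i, hi⟩⟩
  exact Nat.card_pos

section

variable {R : Type*} [CommRing R] {n : ℕ} {C : Submodule R (Fin n → R)}

theorem minHammingDist_le_hammingWeight {v : Fin n → R} (hv : v ∈ C) (hv0 : v ≠ 0) :
    minHammingDist C ≤ hammingWeight v :=
  Nat.sInf_le ⟨v, hv, hv0, rfl⟩

theorem minHammingDist_pos (hC : C ≠ ⊥) : 0 < minHammingDist C := by
  obtain ⟨v, hv, hv0⟩ := Submodule.exists_mem_ne_zero_of_ne_bot hC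
  obtain ⟨w, -, hw0, hw⟩ : minHammingDist C ∈ {d | ∃ w ∈ C, w ≠ 0 ∧ hammingWeight w = d} :=
    Nat.sInf_mem ⟨_, v, hv, hv0, rfl⟩
  exact hw ▸ hammingWeight_pos hw0

def Submodule.restrictCoords (C : Submodule R (Fin n → R)) (S : Finset (Fin n)) :
    C →ₗ[R] (S → R) :=
  (LinearMap.funLeft R R ((↑) : S → Fin n)).comp C.subtype

theorem Submodule.restrictCoords_injective {S : Finset (Fin n)}
    (hS : n - #S < minHammingDist C) : Function.Injective (C.restrictCoords S) := by
  refine (injective_iff_map_eq_zero _).2 fun x hx => ?_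
  by_contra hx0
  have hvanish : ∀ i ∈ S, (x : Fin n → R) i = 0 := fun i hi => congrFun hx ⟨i, hi⟩
  have hx0' : (x : Fin n → R) ≠ 0 := fun h => hx0 (Subtype.ext h)
  have hd := minHammingDist_le_hammingWeight x.2 hx0'
  have hw := hammingWeight_le_of_forall_mem_eq_zero hvanish
  omega

theorem Submodule.restrictCoords_bijective [Finite R] {S : Finset (Fin n)}
    (hS : n - #S < minHammingDist C) (hcard : Nat.card C = Nat.card R ^ #S) :
    Function.Bijective (C.restrictCoords S) := by
  refine (Nat.bijective_iff_injective_and_card _).2 ⟨restrictCoords_injective hS, ?_⟩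
  rw [hcard, Nat.card_fun, Nat.card_eq_fintype_card (α := S), Fintype.card_coe]

theorem Submodule.free_of_card_eq_pow_succ_sub_minHammingDist [Finite R]
    (hMDS : Nat.card C = Nat.card R ^ (n + 1 - minHammingDist C)) : Module.Free R C := by
  rcases eq_or_ne C ⊥ with rfl | hC
  · infer_instance
  have hd := minHammingDist_pos hC
  obtain ⟨S, -, hS⟩ := exists_subset_card_eq (s := (univ : Finset (Fin n)))
    (n := n + 1 - minHammingDist C) (by rw [card_univ, Fintype.card_fin]; omega)
  have hbij := restrictCoords_bijective (by omega) (hS ▸ hMDS)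
  exact Module.Free.of_equiv (LinearEquiv.ofBijective _ hbij).symm

end

theorem mds_implies_free_over_chain_ring_general (R : Type*) [CommRing R] [Finite R]
    (n : ℕ) (C : Submodule R (Fin n → R))
    (hMDS : Nat.card C = Nat.card R ^ (n + 1 - minHammingDist C)) :
    Module.Free R C :=
  C.free_of_card_eq_pow_succ_sub_minHammingDist hMDS

/-- A linear MDS code over a finite chain ring `R` (a nonzero code meeting the Singleton
bound `d_H(C) = n − log_{|R|}|C| + 1`, i.e. `|C| = |R|^(n + 1 - d_H(C))`) is a free
`R`-module (all `k_i` with `i > 0` in its type vanish). -/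
theorem mds_implies_free_over_chain_ring (R : Type*) [CommRing R] [Finite R] [Nontrivial R]
    (hchain : ∀ I J : Ideal R, I ≤ J ∨ J ≤ I)
    (γ : R) (hmax : (Ideal.span {γ} : Ideal R).IsMaximal)
    (e : ℕ) (he0 : 0 < e) (he : γ ^ e = 0) (he' : γ ^ (e - 1) ≠ 0)
    (n : ℕ) (C : Submodule R (Fin n → R)) (hC : C ≠ ⊥)
    (hd : minHammingDist C ≤ n)
    (hMDS : Nat.card C = Nat.card R ^ (n + 1 - minHammingDist C)) :
    Module.Free R C :=
  mds_implies_free_over_chain_ring_general R n C hMDS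
end

section
/- Let R be a finite chain ring with maximal ideal ⟨γ⟩, residue field K of characteristic p, and let λ be a unit of R with gcd(n,p) = 1. Then every prime ideal of R[x]/⟨x^n − λ⟩ is of the form ⟨π(x), γ⟩ where π(x) is a monic basic irreducible divisor of x^n − λ in R[x]; moreover each such ideal is maximal. -/
/-!
Reduction modulo `γ` maps `R[X]` onto `K[X]`, `K = R ⧸ ⟨γ⟩`, with kernel `⟨γ⟩`, so `⟨π, γ⟩` is
the preimage of `⟨π̄⟩` and is maximal as soon as `π̄` is irreducible. Since `γ` is nilpotent,
every prime of `R[X] ⧸ ⟨xⁿ - λ⟩` contains `γ` and is therefore the preimage of a prime `⟨q⟩` of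
`K[X]`, with `q` monic irreducible and dividing `xⁿ - λ̄`. As `n` is prime to the characteristic,
`xⁿ - λ̄` is separable, so `q` is coprime to its cofactor, and Hensel lifting along the powers of
`γ` produces a monic `π ∣ xⁿ - λ` with `π̄ = q`.
-/
open Polynomial

theorem exists_degree_lt_mul_add_mul_eq {S : Type*} [CommRing S] [Nontrivial S] {a b : S[X]}
    (ha : a.Monic) (hab : IsCoprime a b) (h : S[X]) :
    ∃ s t : S[X], s.degree < a.degree ∧ a * t + b * s = h := by
  obtain ⟨u, v, huv⟩ := hab
  refine ⟨v * h %ₘ a, u * h + b * (v * h /ₘ a), degree_modByMonic_lt _ ha, ?_⟩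
  linear_combination h * huv + b * modByMonic_add_div (v * h) a

theorem exists_monic_irreducible_span_eq {K : Type*} [Field K] (Q : Ideal K[X]) [Q.IsPrime]
    (hQ : Q ≠ ⊥) : ∃ q : K[X], q.Monic ∧ Irreducible q ∧ Q = Ideal.span {q} := by
  classical
  have hg := Submodule.IsPrincipal.prime_generator_of_isPrime Q hQ
  refine ⟨normalize (Submodule.IsPrincipal.generator Q), monic_normalize hg.ne_zero,
    (associated_normalize _).irreducible hg.irreducible, ?_⟩
  rw [Ideal.span_singleton_eq_span_singleton.2 (associated_normalize _).symm,
    Ideal.span_singleton_generator]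

theorem natCast_ne_zero_of_coprime_ringChar {K : Type*} [Ring K] [Nontrivial K] {n : ℕ}
    (hn : n.Coprime (ringChar K)) : (n : K) ≠ 0 :=
  fun h => CharP.ringChar_ne_one (hn.symm.eq_one_of_dvd (ringChar.dvd h))

section Residue

variable {R : Type*} [CommRing R] {γ : R}

-- `{γ}` would be read as structure-instance notation here.
local notation "ρ" => Ideal.Quotient.mk (Ideal.span (singleton γ : Set _))

variable (γ) in
theorem C_dvd_iff_map_mk_eq_zero (x : R[X]) : C γ ∣ x ↔ x.map ρ = 0 := by
  simp [C_dvd_iff_dvd_coeff, Polynomial.ext_iff, Ideal.Quotient.eq_zero_iff_mem,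
    Ideal.mem_span_singleton]

variable (γ) in
theorem mapRingHom_mk_surjective : Function.Surjective (mapRingHom ρ) :=
  map_surjective _ Ideal.Quotient.mk_surjective

variable (γ) in
theorem ker_mapRingHom_mk : RingHom.ker (mapRingHom ρ) = Ideal.span {C γ} := by
  rw [ker_mapRingHom, Ideal.mk_ker, Ideal.map_span, Set.image_singleton]

variable (γ) in
theorem comap_mapRingHom_span_map (π : R[X]) :
    (Ideal.span {π.map ρ}).comap (mapRingHom ρ) = Ideal.span {π, C γ} := by
  rw [← coe_mapRingHom, ← Set.image_singleton, ← Ideal.map_span,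
    Ideal.comap_map_of_surjective' _ (mapRingHom_mk_surjective γ), ker_mapRingHom_mk,
    Ideal.span_insert]

theorem isMaximal_span_pair_C_of_irreducible (hmax : (Ideal.span {γ}).IsMaximal) {π : R[X]}
    (hπ : Irreducible (π.map ρ)) : (Ideal.span {π, C γ}).IsMaximal := by
  let := Ideal.Quotient.field (Ideal.span {γ})
  have := PrincipalIdealRing.isMaximal_of_irreducible hπ
  rw [← comap_mapRingHom_span_map]
  exact Ideal.comap_isMaximal_of_surjective _ (mapRingHom_mk_surjective γ)

theorem exists_monic_irreducible_comap_eq (hmax : (Ideal.span {γ}).IsMaximal)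
    (Q : Ideal R[X]) [Q.IsPrime] (hγ : C γ ∈ Q) {f : R[X]} (hf : f ∈ Q) (hf₀ : f.map ρ ≠ 0) :
    ∃ q : (R ⧸ Ideal.span {γ})[X], q.Monic ∧ Irreducible q ∧ q ∣ f.map ρ ∧
      Q = (Ideal.span {q}).comap (mapRingHom ρ) := by
  let := Ideal.Quotient.field (Ideal.span {γ})
  have hker : RingHom.ker (mapRingHom ρ) ≤ Q := by
    rwa [ker_mapRingHom_mk, Ideal.span_singleton_le_iff_mem]
  have := Ideal.map_isPrime_of_surjective (mapRingHom_mk_surjective γ) hker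
  have hfQ := Ideal.mem_map_of_mem (mapRingHom ρ) hf
  obtain ⟨q, hq, hq_irr, hQ⟩ :=
    exists_monic_irreducible_span_eq _ (Submodule.ne_bot_iff _ |>.2 ⟨_, hfQ, hf₀⟩)
  refine ⟨q, hq, hq_irr, Ideal.mem_span_singleton.1 (hQ ▸ hfQ), ?_⟩
  rw [← hQ, Ideal.comap_map_of_surjective' _ (mapRingHom_mk_surjective γ), sup_eq_left.2 hker]

theorem isMaximal_span_mk_pair_of_dvd (hmax : (Ideal.span {γ}).IsMaximal) {f π : R[X]}
    (hπf : π ∣ f) (hπ : Irreducible (π.map ρ)) :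
    (Ideal.span {Ideal.Quotient.mk (Ideal.span {f}) π,
      Ideal.Quotient.mk (Ideal.span {f}) (C γ)}).IsMaximal := by
  have := isMaximal_span_pair_C_of_irreducible hmax hπ
  rw [← Set.image_pair, ← Ideal.map_span]
  refine Ideal.IsMaximal.map_of_surjective_of_ker_le Ideal.Quotient.mk_surjective ?_
  rw [Ideal.mk_ker, Ideal.span_singleton_le_iff_mem]
  exact Ideal.mem_of_dvd _ hπf (Ideal.subset_span (Set.mem_insert _ _))

section Hensel

variable [Nontrivial (R ⧸ Ideal.span {γ})]

theorem exists_degree_lt_C_dvd_sub {a b : R[X]} (ha : a.Monic)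
    (hab : IsCoprime (a.map ρ) (b.map ρ)) (h : R[X]) :
    ∃ s t : R[X], s.degree < a.degree ∧ C γ ∣ h - a * t - b * s := by
  have hρ := map_surjective _ (Ideal.Quotient.mk_surjective (I := Ideal.span {γ}))
  obtain ⟨s₀, t₀, hs₀, hst₀⟩ := exists_degree_lt_mul_add_mul_eq (ha.map _) hab (h.map _)
  obtain ⟨s, rfl, hs⟩ := exists_degree_eq_of_mem_lifts ((mem_lifts s₀).2 (hρ s₀))
  obtain ⟨t, rfl⟩ := hρ t₀
  refine ⟨s, t, by rwa [hs, ← ha.degree_map ρ], (C_dvd_iff_map_mk_eq_zero γ _).2 ?_⟩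
  rw [Polynomial.map_sub, Polynomial.map_sub, Polynomial.map_mul, Polynomial.map_mul, ← hst₀]
  ring

theorem exists_hensel_step {f a b : R[X]} {k : ℕ} (hk : k ≠ 0) (ha : a.Monic)
    (hab : IsCoprime (a.map ρ) (b.map ρ)) (hf : C (γ ^ k) ∣ f - a * b) :
    ∃ a' b' : R[X], a'.Monic ∧ a'.map ρ = a.map ρ ∧ b'.map ρ = b.map ρ ∧
      C (γ ^ (k + 1)) ∣ f - a' * b' := by
  obtain ⟨h, hh⟩ := hf
  obtain ⟨s, t, hs, w, hw⟩ := exists_degree_lt_C_dvd_sub ha hab h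
  have hγ : ρ γ = 0 := Ideal.Quotient.eq_zero_iff_mem.2 (Ideal.mem_span_singleton_self γ)
  refine ⟨a + C (γ ^ k) * s, b + C (γ ^ k) * t, ha.add_of_left ?_, by simp [hγ, hk],
    by simp [hγ, hk], ?_⟩
  · exact (smul_eq_C_mul (p := s) _ ▸ degree_smul_le _ _).trans_lt hs
  · have hγk : C (γ ^ (k + 1)) ∣ C (γ ^ k) * C (γ ^ k) := by
      rw [← C_mul, ← pow_add]
      exact map_dvd C (pow_dvd_pow γ (by omega))
    have : f - (a + C (γ ^ k) * s) * (b + C (γ ^ k) * t) =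
        C (γ ^ (k + 1)) * w - C (γ ^ k) * C (γ ^ k) * (s * t) := by
      rw [pow_succ, C_mul]
      linear_combination hh + C (γ ^ k) * hw
    rw [this]
    exact dvd_sub (dvd_mul_right _ _) (hγk.mul_right _)

theorem exists_hensel_lift (hγ : IsNilpotent γ) {f : R[X]}
    {a₀ b₀ : (R ⧸ Ideal.span {γ})[X]} (ha₀ : a₀.Monic) (hab₀ : IsCoprime a₀ b₀)
    (hf : f.map ρ = a₀ * b₀) :
    ∃ a b : R[X], a.Monic ∧ a.map ρ = a₀ ∧ b.map ρ = b₀ ∧ f = a * b := by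
  have hρ := map_surjective _ (Ideal.Quotient.mk_surjective (I := Ideal.span {γ}))
  have approx : ∀ k, ∃ a b : R[X], a.Monic ∧ a.map ρ = a₀ ∧ b.map ρ = b₀ ∧
      C (γ ^ (k + 1)) ∣ f - a * b := by
    intro k
    induction k with
    | zero =>
      obtain ⟨a, rfl, -, ha⟩ := lifts_and_degree_eq_and_monic ((mem_lifts a₀).2 (hρ a₀)) ha₀
      obtain ⟨b, rfl⟩ := hρ b₀
      refine ⟨a, b, ha, rfl, rfl, ?_⟩
      rw [zero_add, pow_one, C_dvd_iff_map_mk_eq_zero, Polynomial.map_sub, Polynomial.map_mul,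
        hf, sub_self]
    | succ k ih =>
      obtain ⟨a, b, ha, rfl, rfl, hab⟩ := ih
      exact exists_hensel_step k.succ_ne_zero ha hab₀ hab
  obtain ⟨e, he⟩ := hγ
  obtain ⟨a, b, ha, ha₀', hb₀', hab⟩ := approx e
  rw [pow_succ, he, zero_mul, C_0, zero_dvd_iff, sub_eq_zero] at hab
  exact ⟨a, b, ha, ha₀', hb₀', hab⟩

end Hensel

end Residue

theorem prime_ideals_of_constacyclic_ambient_general (R : Type*) [CommRing R]
    (γ : R) (hmax : (Ideal.span {γ} : Ideal R).IsMaximal)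
    (e : ℕ) (he : γ ^ e = 0)
    (p : ℕ) (hp : p = ringChar (R ⧸ Ideal.span {γ}))
    (lam : R) (hlam : IsUnit lam) (n : ℕ) (hcop : Nat.Coprime n p) :
    (∀ P : Ideal (Polynomial R ⧸ Ideal.span {(X : Polynomial R) ^ n - C lam}),
      P.IsPrime → ∃ π : Polynomial R, π.Monic ∧ π ∣ X ^ n - C lam ∧
        Irreducible (π.map (Ideal.Quotient.mk (Ideal.span {γ}))) ∧
        P = Ideal.span {Ideal.Quotient.mk (Ideal.span {(X : Polynomial R) ^ n - C lam}) π,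
          Ideal.Quotient.mk (Ideal.span {(X : Polynomial R) ^ n - C lam}) (C γ)}) ∧
    (∀ π : Polynomial R, π.Monic → π ∣ X ^ n - C lam →
      Irreducible (π.map (Ideal.Quotient.mk (Ideal.span {γ}))) →
      (Ideal.span {Ideal.Quotient.mk (Ideal.span {(X : Polynomial R) ^ n - C lam}) π,
        Ideal.Quotient.mk (Ideal.span {(X : Polynomial R) ^ n - C lam}) (C γ)}).IsMaximal) := by
  let := Ideal.Quotient.field (Ideal.span {γ})
  refine ⟨fun P hP => ?_, fun π _ hπf hπ => isMaximal_span_mk_pair_of_dvd hmax hπf hπ⟩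
  have hsep : ((X ^ n - C lam : R[X]).map (Ideal.Quotient.mk (Ideal.span {γ}))).Separable := by
    rw [Polynomial.map_sub, Polynomial.map_pow, map_X, map_C]
    exact separable_X_pow_sub_C _ (natCast_ne_zero_of_coprime_ringChar (hp ▸ hcop))
      (hlam.map _).ne_zero
  have hγP : C γ ∈ P.comap (Ideal.Quotient.mk _) :=
    hP.mem_of_pow_mem e (by rw [← map_pow, ← C_pow, he, C_0, map_zero]; exact P.zero_mem)
  have hfP : X ^ n - C lam ∈ P.comap (Ideal.Quotient.mk (Ideal.span {X ^ n - C lam})) := by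
    simp [Ideal.Quotient.eq_zero_iff_mem.2 (Ideal.mem_span_singleton_self _)]
  obtain ⟨q, hq, hq_irr, ⟨c, hqc⟩, hP_eq⟩ :=
    exists_monic_irreducible_comap_eq hmax _ hγP hfP hsep.ne_zero
  obtain ⟨π, b, hπ, rfl, -, hπb⟩ := exists_hensel_lift ⟨e, he⟩ hq (hqc ▸ hsep).isCoprime hqc
  refine ⟨π, hπ, ⟨b, hπb⟩, hq_irr, ?_⟩
  rw [← Ideal.map_comap_of_surjective _ Ideal.Quotient.mk_surjective P, hP_eq,
    comap_mapRingHom_span_map, Ideal.map_span, Set.image_pair]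

/-- Over a finite chain ring `R` with maximal ideal `⟨γ⟩`, residue field of characteristic
`p`, a unit `λ` and `gcd(n,p) = 1`: every prime ideal of `R[x]/⟨x^n − λ⟩` is of the form
`⟨π(x), γ⟩` with `π` a monic basic irreducible divisor of `x^n − λ` in `R[x]`, and every
ideal of this form is maximal. -/
theorem prime_ideals_of_constacyclic_ambient (R : Type*) [CommRing R] [Finite R]
    [Nontrivial R] (hchain : ∀ I J : Ideal R, I ≤ J ∨ J ≤ I)
    (γ : R) (hmax : (Ideal.span {γ} : Ideal R).IsMaximal)
    (e : ℕ) (he0 : 0 < e) (he : γ ^ e = 0) (he' : γ ^ (e - 1) ≠ 0)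
    (p : ℕ) (hp : p = ringChar (R ⧸ Ideal.span {γ}))
    (lam : R) (hlam : IsUnit lam) (n : ℕ) (hn : 0 < n) (hcop : Nat.Coprime n p) :
    (∀ P : Ideal (Polynomial R ⧸ Ideal.span {(X : Polynomial R) ^ n - C lam}),
      P.IsPrime → ∃ π : Polynomial R, π.Monic ∧ π ∣ X ^ n - C lam ∧
        Irreducible (π.map (Ideal.Quotient.mk (Ideal.span {γ}))) ∧
        P = Ideal.span {Ideal.Quotient.mk (Ideal.span {(X : Polynomial R) ^ n - C lam}) π,
          Ideal.Quotient.mk (Ideal.span {(X : Polynomial R) ^ n - C lam}) (C γ)}) ∧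
    (∀ π : Polynomial R, π.Monic → π ∣ X ^ n - C lam →
      Irreducible (π.map (Ideal.Quotient.mk (Ideal.span {γ}))) →
      (Ideal.span {Ideal.Quotient.mk (Ideal.span {(X : Polynomial R) ^ n - C lam}) π,
        Ideal.Quotient.mk (Ideal.span {(X : Polynomial R) ^ n - C lam}) (C γ)}).IsMaximal) :=
  prime_ideals_of_constacyclic_ambient_general R γ hmax e he p hp lam hlam n hcop
end

section
/- Let R be a finite chain ring with maximal ideal ⟨γ⟩ of nilpotency index i, λ a unit of R, and suppose gcd(n, char K) = 1 where K is the residue field. If x^n − λ has exactly b monic basic irreducible divisors π^1, …, π^b in R[x], then every ideal of R[x]/⟨x^n − λ⟩ can be written uniquely as Π_{l=1}^b ⟨π^l(x), γ^{m_l}⟩ with 0 ≤ m_l ≤ i; in particular R[x]/⟨x^n − λ⟩ has exactly (i+1)^b distinct ideals. -/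
/-!
Write `A = R[x]/⟨x^n − λ⟩`. The ideals `⟨π^l⟩` of `A` are pairwise comaximal with zero product, so
by the Chinese remainder theorem every ideal `I` equals `∏ l, (I + ⟨π^l⟩)` and is determined by
the ideals `I + ⟨π^l⟩ ⊇ ⟨π^l⟩`. These are the preimages of the ideals of `R[x]/⟨π^l⟩`, a ring in
which `⟨γ⟩` is maximal (because `π^l` is irreducible mod `γ`) and `γ^i = 0 ≠ γ^(i-1)` (because
`π^l` is monic of positive degree). In such a ring every element outside `⟨γ⟩` is a unit, so the
ideals are exactly the `i + 1` distinct ideals `⟨γ^m⟩`, `0 ≤ m ≤ i`.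
-/

open Polynomial Function

section PrincipalNilpotentMaximal

variable {A : Type*} [CommRing A] {t : A}

theorem isUnit_of_notMem_span_singleton_of_isNilpotent (hmax : (Ideal.span {t}).IsMaximal)
    (ht : IsNilpotent t) {u : A} (hu : u ∉ Ideal.span {t}) : IsUnit u := by
  obtain ⟨y, c, hc, hyc⟩ := hmax.exists_inv hu
  have hc : IsNilpotent c :=
    mem_nilradical.mp (Ideal.span_singleton_le_iff_mem _ |>.mpr (mem_nilradical.mpr ht) hc)
  have hyu : y * u = 1 - c := by rw [← hyc]; ring
  exact isUnit_of_mul_isUnit_right (hyu ▸ hc.isUnit_one_sub)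

theorem eq_span_pow_of_le_of_not_le (hmax : (Ideal.span {t}).IsMaximal) (ht : IsNilpotent t)
    {J : Ideal A} {k : ℕ} (hle : J ≤ Ideal.span {t ^ k})
    (hnle : ¬ J ≤ Ideal.span {t ^ (k + 1)}) : J = Ideal.span {t ^ k} := by
  obtain ⟨a, haJ, ha⟩ := SetLike.not_le_iff_exists.mp hnle
  obtain ⟨u, rfl⟩ := Ideal.mem_span_singleton'.mp (hle haJ)
  have hu : u ∉ Ideal.span {t} := by
    rintro hu
    obtain ⟨v, rfl⟩ := Ideal.mem_span_singleton'.mp hu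
    exact ha (Ideal.mem_span_singleton'.mpr ⟨v, by ring⟩)
  obtain ⟨w, hw⟩ := (isUnit_of_notMem_span_singleton_of_isNilpotent hmax ht hu).exists_left_inv
  refine le_antisymm hle (Ideal.span_singleton_le_iff_mem _ |>.mpr ?_)
  rw [← one_mul (t ^ k), ← hw, mul_assoc]
  exact J.mul_mem_left w haJ

theorem exists_eq_span_pow (hmax : (Ideal.span {t}).IsMaximal) {i : ℕ} (hti : t ^ i = 0)
    (J : Ideal A) : ∃ m ≤ i, J = Ideal.span {t ^ m} := by
  have descend : ∀ k, J ≤ Ideal.span {t ^ k} ∨ ∃ m < k, J = Ideal.span {t ^ m} := by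
    intro k
    induction k with
    | zero => simp
    | succ k ih =>
      rcases ih with hle | ⟨m, hm, hJ⟩
      · by_cases hnext : J ≤ Ideal.span {t ^ (k + 1)}
        · exact .inl hnext
        · exact .inr
            ⟨k, k.lt_succ_self, eq_span_pow_of_le_of_not_le hmax ⟨i, hti⟩ hle hnext⟩
      · exact .inr ⟨m, hm.trans k.lt_succ_self, hJ⟩
  rcases descend i with hle | ⟨m, hm, hJ⟩
  · refine ⟨i, le_rfl, ?_⟩
    rw [hti, Ideal.span_singleton_eq_bot.mpr rfl] at hle ⊢
    exact le_bot_iff.mp hle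
  · exact ⟨m, hm.le, hJ⟩

theorem pow_eq_zero_of_mem_span_pow_succ (ht : IsNilpotent t) {m : ℕ}
    (h : t ^ m ∈ Ideal.span {t ^ (m + 1)}) : t ^ m = 0 := by
  obtain ⟨c, hc⟩ := Ideal.mem_span_singleton'.mp h
  have hzero : t ^ m * (1 - c * t) = 0 := by linear_combination -hc
  exact (((Commute.all c t).isNilpotent_mul_left ht).isUnit_one_sub.mul_left_eq_zero).mp hzero

theorem span_pow_injective (ht : IsNilpotent t) {i : ℕ} (hti' : t ^ (i - 1) ≠ 0) :
    Injective fun m : Fin (i + 1) => Ideal.span {t ^ (m : ℕ)} := by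
  intro m m' h
  beta_reduce at h
  by_contra hne
  wlog hlt : m < m' generalizing m m'
  · exact this h.symm (Ne.symm hne) (lt_of_le_of_ne (not_lt.mp hlt) (Ne.symm hne))
  have hmem : t ^ (m : ℕ) ∈ Ideal.span {t ^ ((m : ℕ) + 1)} := by
    refine Ideal.span_singleton_le_span_singleton.mpr (pow_dvd_pow t hlt) ?_
    exact h ▸ Ideal.mem_span_singleton_self _
  apply hti'
  rw [show i - 1 = m + (i - 1 - m) by omega, pow_add, pow_eq_zero_of_mem_span_pow_succ ht hmem,
    zero_mul]

theorem span_pow_bijective (hmax : (Ideal.span {t}).IsMaximal) {i : ℕ} (hti : t ^ i = 0)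
    (hti' : t ^ (i - 1) ≠ 0) :
    Bijective fun m : Fin (i + 1) => Ideal.span {t ^ (m : ℕ)} := by
  refine ⟨span_pow_injective ⟨i, hti⟩ hti', fun J => ?_⟩
  obtain ⟨m, hm, rfl⟩ := exists_eq_span_pow hmax hti J
  exact ⟨⟨m, Nat.lt_succ_of_le hm⟩, rfl⟩

end PrincipalNilpotentMaximal

namespace Ideal

variable {A : Type*} [CommRing A] {ι : Type*} [Fintype ι] {Q : ι → Ideal A}

theorem prod_sup_eq_self (hQ : Pairwise (IsCoprime on Q)) (hbot : ∏ l, Q l = ⊥) (I : Ideal A) :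
    ∏ l, (I ⊔ Q l) = I := by
  refine le_antisymm ?_ ?_
  · have hmap : map (Quotient.mk I) (∏ l, (I ⊔ Q l)) = ⊥ :=
      calc map (Quotient.mk I) (∏ l, (I ⊔ Q l))
          = ∏ l, map (Quotient.mk I) (I ⊔ Q l) := map_prod (mapHom _) _ _
        _ = ∏ l, map (Quotient.mk I) (Q l) := by
          simp only [map_sup, map_quotient_self, bot_sup_eq]
        _ = map (Quotient.mk I) (∏ l, Q l) := (map_prod (mapHom _) _ _).symm
        _ = ⊥ := by rw [hbot, map_bot]
    rwa [map_eq_bot_iff_le_ker, mk_ker] at hmap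
  · rw [prod_eq_iInf_of_pairwise_isCoprime]
    · exact le_iInf₂ fun l _ => le_sup_left
    · intro l _ l' _ hne
      refine isCoprime_iff_sup_eq.mpr (top_le_iff.mp ?_)
      rw [← isCoprime_iff_sup_eq.mp (hQ hne)]
      exact sup_le_sup le_sup_right le_sup_right

theorem sup_prod_eq_sup_of_isCoprime [DecidableEq ι] {J : ι → Ideal A} (l : ι)
    (hJ : ∀ l', l' ≠ l → IsCoprime (Q l) (J l')) :
    Q l ⊔ ∏ l', J l' = Q l ⊔ J l := by
  rw [← Finset.mul_prod_erase _ _ (Finset.mem_univ l)]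
  refine sup_mul_eq_of_coprime_right (sup_prod_eq_top fun l' hl' => ?_)
  exact isCoprime_iff_sup_eq.mp (hJ l' (Finset.ne_of_mem_erase hl'))

theorem bijective_prod_of_range_eq_Ici {κ : Type*} (hQ : Pairwise (IsCoprime on Q))
    (hbot : ∏ l, Q l = ⊥) (P : ι → κ → Ideal A) (hinj : ∀ l, Injective (P l))
    (hrange : ∀ l, Set.range (P l) = Set.Ici (Q l)) :
    Bijective fun m : ι → κ => ∏ l, P l (m l) := by
  classical
  have hQP : ∀ l m, Q l ≤ P l m := fun l m => (hrange l).subset ⟨m, rfl⟩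
  refine ⟨fun m m' h => funext fun l => hinj l ?_, fun I => ?_⟩
  · have hcop : ∀ m : ι → κ, ∀ l', l' ≠ l → IsCoprime (Q l) (P l' (m l')) :=
      fun m l' hl' => isCoprime_iff_sup_eq.mpr (top_le_iff.mp <|
        (isCoprime_iff_sup_eq.mp (hQ hl'.symm)).ge.trans (sup_le_sup_left (hQP l' _) _))
    have := congrArg (Q l ⊔ ·) h
    simp only [sup_prod_eq_sup_of_isCoprime l (hcop _), sup_eq_right.mpr (hQP l _)] at this
    exact this
  · choose m hm using fun l => (hrange l).symm.subset (le_sup_right : Q l ≤ I ⊔ Q l)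
    exact ⟨m, by simp only [hm, prod_sup_eq_self hQ hbot]⟩

theorem ker_sup_span_injective_and_range_eq_Ici {B κ : Type*} [CommRing B] {ψ : A →+* B}
    (hψ : Surjective ψ) {e : κ → A} (he : Bijective fun m => span {ψ (e m)}) :
    Injective (fun m => RingHom.ker ψ ⊔ span {e m}) ∧
      Set.range (fun m => RingHom.ker ψ ⊔ span {e m}) = Set.Ici (RingHom.ker ψ) := by
  have hcomap : ∀ J : Ideal A, comap ψ (map ψ J) = RingHom.ker ψ ⊔ J := fun J => by
    rw [comap_map_of_surjective ψ hψ, ← RingHom.ker_eq_comap_bot, sup_comm]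
  have hcomap_span : ∀ m, comap ψ (span {ψ (e m)}) = RingHom.ker ψ ⊔ span {e m} :=
    fun m => by rw [← hcomap, map_span, Set.image_singleton]
  refine ⟨?_, Set.Subset.antisymm ?_ fun I hI => ?_⟩
  · intro m m' h
    exact he.injective (comap_injective_of_surjective ψ hψ (by simpa only [hcomap_span] using h))
  · rintro _ ⟨m, rfl⟩
    exact Set.mem_Ici.mpr le_sup_left
  · obtain ⟨m, hm⟩ := he.surjective (map ψ I)
    exact ⟨m, by simp only [← hcomap_span, hm, hcomap, sup_eq_right.mpr (Set.mem_Ici.mp hI)]⟩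

end Ideal

section BasicIrreducible

variable {R : Type*} [CommRing R] {γ : R} {g : R[X]}

theorem isMaximal_span_mk_C (hmax : (Ideal.span {γ}).IsMaximal)
    (hg : Irreducible (g.map (Ideal.Quotient.mk (Ideal.span {γ})))) :
    (Ideal.span {Ideal.Quotient.mk (Ideal.span {g}) (C γ)}).IsMaximal := by
  let : Field (R ⧸ Ideal.span {γ}) := Ideal.Quotient.field _
  set σ := mapRingHom (Ideal.Quotient.mk (Ideal.span {γ}))
  have hσ : Surjective σ := map_surjective _ Ideal.Quotient.mk_surjective
  have hker : RingHom.ker σ = Ideal.span {C γ} := by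
    rw [ker_mapRingHom, Ideal.mk_ker, Ideal.map_span, Set.image_singleton]
  have hM : (Ideal.span {g} ⊔ Ideal.span {C γ}).IsMaximal := by
    have : (Ideal.span {σ g}).IsMaximal := PrincipalIdealRing.isMaximal_of_irreducible hg
    rw [← hker, RingHom.ker_eq_comap_bot, ← Ideal.comap_map_of_surjective σ hσ, Ideal.map_span,
      Set.image_singleton]
    exact Ideal.comap_isMaximal_of_surjective σ hσ
  have := hM.map_of_surjective_of_ker_le Ideal.Quotient.mk_surjective
    (Ideal.mk_ker.trans_le le_sup_left)
  rwa [Ideal.map_sup, Ideal.map_quotient_self, bot_sup_eq, Ideal.map_span,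
    Set.image_singleton] at this

theorem mk_C_ne_zero_of_monic (hg : g.Monic) (hdeg : 0 < g.natDegree) {c : R} (hc : c ≠ 0) :
    Ideal.Quotient.mk (Ideal.span {g}) (C c) ≠ 0 := by
  rw [Ne, Ideal.Quotient.eq_zero_iff_mem, Ideal.mem_span_singleton]
  exact hg.not_dvd_of_natDegree_lt (C_ne_zero.mpr hc) (by rwa [natDegree_C])

theorem span_mk_C_pow_bijective (hmax : (Ideal.span {γ}).IsMaximal) {i : ℕ} (hi : γ ^ i = 0)
    (hi' : γ ^ (i - 1) ≠ 0) (hg : g.Monic)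
    (hbasic : Irreducible (g.map (Ideal.Quotient.mk (Ideal.span {γ})))) :
    Bijective fun m : Fin (i + 1) =>
      Ideal.span {Ideal.Quotient.mk (Ideal.span {g}) (C γ) ^ (m : ℕ)} := by
  let : Field (R ⧸ Ideal.span {γ}) := Ideal.Quotient.field _
  have hdeg : 0 < g.natDegree :=
    hg.natDegree_map (Ideal.Quotient.mk (Ideal.span {γ})) ▸ hbasic.natDegree_pos
  refine span_pow_bijective (isMaximal_span_mk_C hmax hbasic) ?_ ?_ <;> rw [← map_pow, ← map_pow]
  · rw [hi, map_zero, map_zero]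
  · exact mk_C_ne_zero_of_monic hg hdeg hi'

theorem span_mk_sup_span_mk_C_pow_injective_and_range_eq_Ici {f : R[X]} (hgf : g ∣ f)
    (hmax : (Ideal.span {γ}).IsMaximal) {i : ℕ} (hi : γ ^ i = 0) (hi' : γ ^ (i - 1) ≠ 0)
    (hg : g.Monic) (hbasic : Irreducible (g.map (Ideal.Quotient.mk (Ideal.span {γ})))) :
    Injective (fun m : Fin (i + 1) => Ideal.span {Ideal.Quotient.mk (Ideal.span {f}) g} ⊔
        Ideal.span {Ideal.Quotient.mk (Ideal.span {f}) (C γ) ^ (m : ℕ)}) ∧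
      Set.range (fun m : Fin (i + 1) => Ideal.span {Ideal.Quotient.mk (Ideal.span {f}) g} ⊔
        Ideal.span {Ideal.Quotient.mk (Ideal.span {f}) (C γ) ^ (m : ℕ)}) =
        Set.Ici (Ideal.span {Ideal.Quotient.mk (Ideal.span {f}) g}) := by
  have hle : Ideal.span {f} ≤ Ideal.span {g} := Ideal.span_singleton_le_span_singleton.mpr hgf
  have hker : RingHom.ker (Ideal.Quotient.factor hle) =
      Ideal.span {Ideal.Quotient.mk (Ideal.span {f}) g} := by
    rw [Ideal.Quotient.factor_ker, Ideal.map_span, Set.image_singleton]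
  rw [← hker]
  refine Ideal.ker_sup_span_injective_and_range_eq_Ici (Ideal.Quotient.factor_surjective hle) ?_
  simp only [map_pow]
  exact span_mk_C_pow_bijective hmax hi hi' hg hbasic

end BasicIrreducible

theorem ideals_of_constacyclic_ambient_general (R : Type*) [CommRing R]
    (γ : R) (hmax : (Ideal.span {γ} : Ideal R).IsMaximal)
    (i : ℕ) (hi : γ ^ i = 0) (hi' : γ ^ (i - 1) ≠ 0)
    (lam : R) (n : ℕ)
    (b : ℕ) (π : Fin b → Polynomial R)
    (hmonic : ∀ l, (π l).Monic)
    (hbasic : ∀ l, Irreducible ((π l).map (Ideal.Quotient.mk (Ideal.span {γ}))))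
    (hcoprime : ∀ l m, l ≠ m → IsCoprime (π l) (π m))
    (hprod : (∏ l, π l) = X ^ n - C lam) :
    (∀ I : Ideal (Polynomial R ⧸ Ideal.span {(X : Polynomial R) ^ n - C lam}),
      ∃! m : Fin b → Fin (i + 1),
        I = ∏ l, Ideal.span
          {Ideal.Quotient.mk (Ideal.span {(X : Polynomial R) ^ n - C lam}) (π l),
           (Ideal.Quotient.mk (Ideal.span {(X : Polynomial R) ^ n - C lam}) (C γ)) ^
             (m l : ℕ)}) ∧
    Nat.card (Ideal (Polynomial R ⧸ Ideal.span {(X : Polynomial R) ^ n - C lam})) =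
      (i + 1) ^ b := by
  set φ := Ideal.Quotient.mk (Ideal.span {(X : R[X]) ^ n - C lam})
  have hlocal l := span_mk_sup_span_mk_C_pow_injective_and_range_eq_Ici
    (hprod ▸ Finset.dvd_prod_of_mem π (Finset.mem_univ l)) hmax hi hi' (hmonic l) (hbasic l)
  have hbij := Ideal.bijective_prod_of_range_eq_Ici (Q := fun l => Ideal.span {φ (π l)})
    (fun l l' h => (Ideal.isCoprime_span_singleton_iff _ _).mpr ((hcoprime l l' h).map φ))
    (by rw [Ideal.prod_span_singleton, ← map_prod, hprod, Ideal.span_singleton_eq_bot,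
      Ideal.Quotient.mk_singleton_self])
    _ (fun l => (hlocal l).1) (fun l => (hlocal l).2)
  simp only [Ideal.span_insert]
  refine ⟨fun I => by simpa only [eq_comm] using hbij.existsUnique I, ?_⟩
  rw [← Nat.card_eq_of_bijective _ hbij, Nat.card_fun, Nat.card_fin, Nat.card_fin]

/-- Let `R` be a finite chain ring with maximal ideal `⟨γ⟩` of nilpotency index `i` and
residue field `K` with `gcd(n, char K) = 1`, `λ` a unit of `R`.  If `x^n − λ` has exactly
`b` monic basic irreducible (pairwise coprime) divisors `π^1, …, π^b` in `R[x]`, then every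
ideal of `R[x]/⟨x^n − λ⟩` is uniquely `Π_{l=1}^b ⟨π^l(x), γ^{m_l}⟩` with `0 ≤ m_l ≤ i`;
in particular `R[x]/⟨x^n − λ⟩` has exactly `(i+1)^b` ideals. -/
theorem ideals_of_constacyclic_ambient (R : Type*) [CommRing R] [Finite R] [Nontrivial R]
    (hchain : ∀ I J : Ideal R, I ≤ J ∨ J ≤ I)
    (γ : R) (hmax : (Ideal.span {γ} : Ideal R).IsMaximal)
    (i : ℕ) (hi0 : 0 < i) (hi : γ ^ i = 0) (hi' : γ ^ (i - 1) ≠ 0)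
    (p : ℕ) (hp : p = ringChar (R ⧸ Ideal.span {γ}))
    (lam : R) (hlam : IsUnit lam) (n : ℕ) (hn : 0 < n) (hcop : Nat.Coprime n p)
    (b : ℕ) (π : Fin b → Polynomial R)
    (hmonic : ∀ l, (π l).Monic)
    (hbasic : ∀ l, Irreducible ((π l).map (Ideal.Quotient.mk (Ideal.span {γ}))))
    (hcoprime : ∀ l m, l ≠ m → IsCoprime (π l) (π m))
    (hprod : (∏ l, π l) = X ^ n - C lam) :
    (∀ I : Ideal (Polynomial R ⧸ Ideal.span {(X : Polynomial R) ^ n - C lam}),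
      ∃! m : Fin b → Fin (i + 1),
        I = ∏ l, Ideal.span
          {Ideal.Quotient.mk (Ideal.span {(X : Polynomial R) ^ n - C lam}) (π l),
           (Ideal.Quotient.mk (Ideal.span {(X : Polynomial R) ^ n - C lam}) (C γ)) ^
             (m l : ℕ)}) ∧
    Nat.card (Ideal (Polynomial R ⧸ Ideal.span {(X : Polynomial R) ^ n - C lam})) =
      (i + 1) ^ b :=
  ideals_of_constacyclic_ambient_general R γ hmax i hi hi' lam n b π hmonic hbasic hcoprime hprod
end
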